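/- Let n ≥ 1, d ≥ 2 and k ∈ {1,…,d−1} be integers, let p₁,…,pₙ ∈ ℝ^d, and suppose (X*, y*) is a minimizer of G_{t}(X,y) := t·∑_{i=1}^n yᵢ − ∑_{i=1}^n ln(yᵢ² − ‖X pᵢ‖₂²) − ln det(X) − ln det(I_d − X) over the domain D of pairs (X,y) with X symmetric, trace(X) = d−k, 0 ≺ X ≺ I_d, and ‖X pᵢ‖₂ < yᵢ for every i, for some t > 1. Let X₀ := ((d−k)/d)·I_d and (y₀)ᵢ := √(‖X₀ pᵢ‖₂² + e). Then the initialization gap ρ := G_{t}(X₀, y₀) − G_{t}(X*, y*) satisfies ρ ≤ t·∑_{i=1}^n (y₀)ᵢ − n + 2d·ln d + ∑_{i=1}^n y*ᵢ. -/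

import Mathlib

open Matrix

/-- The Euclidean (ℓ₂) norm of a vector in ℝ^d. -/
noncomputable def l2norm {d : ℕ} (u : Fin d → ℝ) : ℝ := Real.sqrt (∑ j, (u j) ^ 2)

/-- The barrier objective
`G_t(X,y) = t·∑ᵢ yᵢ − ∑ᵢ ln(yᵢ² − ‖X pᵢ‖₂²) − ln det X − ln det (I − X)`. -/
noncomputable def barrierG {n d : ℕ} (p : Fin n → Fin d → ℝ) (t : ℝ)
    (X : Matrix (Fin d) (Fin d) ℝ) (y : Fin n → ℝ) : ℝ :=
  t * ∑ i, y i - ∑ i, Real.log ((y i) ^ 2 - (l2norm (X.mulVec (p i))) ^ 2)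
    - Real.log X.det - Real.log (1 - X).det

/-- The domain `D` of the barrier problem: `X` symmetric with `trace X = d − k`,
`0 ≺ X ≺ I`, and `‖X pᵢ‖₂ < yᵢ` for every `i`. -/
def barrierDom {n d : ℕ} (k : ℕ) (p : Fin n → Fin d → ℝ)
    (X : Matrix (Fin d) (Fin d) ℝ) (y : Fin n → ℝ) : Prop :=
  Xᵀ = X ∧ X.trace = ((d - k : ℕ) : ℝ) ∧ X.PosDef ∧ (1 - X).PosDef ∧
    ∀ i, l2norm (X.mulVec (p i)) < y i

/-!
On the domain, `0 ≺ X ≺ I` forces every eigenvalue of `X` into `(0, 1)`, so both log-determinant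
terms of `G_t` are nonnegative, and `ln (y² - ‖X p‖²) ≤ 2 ln y ≤ 2y - 2`; with `t ≥ 1` this gives
`G_t(X*, y*) ≥ -∑ y*ᵢ`. At the scalar point `X₀ = c I` everything is explicit: each log term of
`y₀` equals `ln e = 1`, and `-d ln c - d ln (1 - c) ≤ 2 d ln d` because `c = (d - k)/d` and
`1 - c = k/d` have numerators at least `1`.
-/

namespace Matrix

variable {m : Type*} [Fintype m] [DecidableEq m] {X : Matrix m m ℝ}

lemma IsHermitian.eigenvalues_lt_one (hX : X.IsHermitian) (h1 : (1 - X).PosDef) (i : m) :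
    hX.eigenvalues i < 1 := by
  have hv : star ⇑(hX.eigenvectorBasis i) ⬝ᵥ ⇑(hX.eigenvectorBasis i) = 1 := by
    rw [dotProduct_comm, ← EuclideanSpace.inner_eq_star_dotProduct,
      hX.eigenvectorBasis.inner_eq_one]
  have hpos := h1.dotProduct_mulVec_pos (x := ⇑(hX.eigenvectorBasis i))
    (by simpa using hX.eigenvectorBasis.orthonormal.ne_zero i)
  rw [sub_mulVec, one_mulVec, dotProduct_sub, hv] at hpos
  rw [hX.eigenvalues_eq]
  simpa using hpos

lemma PosDef.det_le_one (hX : X.PosDef) (h1 : (1 - X).PosDef) : X.det ≤ 1 := by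
  rw [hX.isHermitian.det_eq_prod_eigenvalues]
  exact Finset.prod_le_one (fun i _ => (hX.eigenvalues_pos i).le)
    (fun i _ => (hX.isHermitian.eigenvalues_lt_one h1 i).le)

lemma PosDef.log_det_add_log_det_one_sub_nonpos (hX : X.PosDef) (h1 : (1 - X).PosDef) :
    Real.log X.det + Real.log (1 - X).det ≤ 0 := by
  have h1' : (1 - (1 - X)).PosDef := by rwa [sub_sub_cancel]
  linarith [Real.log_nonpos hX.det_pos.le (hX.det_le_one h1),
    Real.log_nonpos h1.det_pos.le (h1.det_le_one h1')]

end Matrix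

lemma Real.log_sq_sub_sq_le {a y : ℝ} (ha : 0 ≤ a) (hay : a < y) :
    Real.log (y ^ 2 - a ^ 2) ≤ 2 * y - 2 :=
  calc Real.log (y ^ 2 - a ^ 2) ≤ Real.log (y ^ 2) :=
        Real.log_le_log (by nlinarith) (by nlinarith)
    _ = 2 * Real.log y := by rw [Real.log_pow]; norm_num
    _ ≤ 2 * y - 2 := by linarith [Real.log_le_sub_one_of_pos (ha.trans_lt hay)]

lemma Real.neg_log_div_le_log {a b : ℝ} (ha : 1 ≤ a) (hb : 0 < b) :
    -Real.log (a / b) ≤ Real.log b := by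
  rw [Real.log_div (by linarith) hb.ne']
  linarith [Real.log_nonneg ha]

lemma l2norm_nonneg {d : ℕ} (u : Fin d → ℝ) : 0 ≤ l2norm u := Real.sqrt_nonneg _

section Barrier

variable {n d : ℕ} (p : Fin n → Fin d → ℝ) (t : ℝ)

lemma neg_sum_le_barrierG {k : ℕ} {X : Matrix (Fin d) (Fin d) ℝ} {y : Fin n → ℝ}
    (hD : barrierDom k p X y) (ht : 1 ≤ t) : -∑ i, y i ≤ barrierG p t X y := by
  obtain ⟨-, -, hX, h1X, hy⟩ := hD
  have hlog : ∑ i, Real.log (y i ^ 2 - l2norm (X *ᵥ p i) ^ 2) ≤ ∑ i, (2 * y i - 2) :=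
    Finset.sum_le_sum fun i _ => Real.log_sq_sub_sq_le (l2norm_nonneg _) (hy i)
  have hy0 : 0 ≤ ∑ i, y i :=
    Finset.sum_nonneg fun i _ => (l2norm_nonneg _).trans (hy i).le
  rw [Finset.sum_sub_distrib, ← Finset.mul_sum] at hlog
  simp only [Finset.sum_const, Finset.card_univ, Fintype.card_fin, nsmul_eq_mul] at hlog
  unfold barrierG
  linarith [hX.log_det_add_log_det_one_sub_nonpos h1X, mul_nonneg (sub_nonneg.2 ht) hy0]

lemma barrierG_smul_one (y : Fin n → ℝ) (c : ℝ) :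
    barrierG p t (c • 1) y = t * ∑ i, y i
      - ∑ i, Real.log (y i ^ 2 - l2norm ((c • 1 : Matrix (Fin d) (Fin d) ℝ) *ᵥ p i) ^ 2)
      - d * Real.log c - d * Real.log (1 - c) := by
  have h1 : (1 : Matrix (Fin d) (Fin d) ℝ) - c • 1 = (1 - c) • 1 := by rw [sub_smul, one_smul]
  simp only [barrierG, h1, det_smul, det_one, mul_one, Fintype.card_fin, Real.log_pow]

lemma sum_log_sq_sub_sq_eq_card (X : Matrix (Fin d) (Fin d) ℝ) {y : Fin n → ℝ}
    (hy : ∀ i, y i = Real.sqrt (l2norm (X *ᵥ p i) ^ 2 + Real.exp 1)) :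
    ∑ i, Real.log (y i ^ 2 - l2norm (X *ᵥ p i) ^ 2) = n := by
  have hi : ∀ i, Real.log (y i ^ 2 - l2norm (X *ᵥ p i) ^ 2) = 1 := fun i => by
    rw [hy i, Real.sq_sqrt (by positivity), add_sub_cancel_left, Real.log_exp]
  simp [hi]

lemma barrierG_init_le {k : ℕ} (hk1 : 1 ≤ k) (hk2 : k ≤ d - 1) {y₀ : Fin n → ℝ}
    (hy₀ : ∀ i, y₀ i = Real.sqrt
      (l2norm (((((d : ℝ) - k) / d) • 1 : Matrix (Fin d) (Fin d) ℝ) *ᵥ p i) ^ 2 + Real.exp 1)) :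
    barrierG p t ((((d : ℝ) - k) / d) • 1) y₀
      ≤ t * ∑ i, y₀ i - n + 2 * d * Real.log d := by
  have hd : (0 : ℝ) < d := Nat.cast_pos.2 (by omega)
  have hdk : (1 : ℝ) ≤ d - k := le_sub_iff_add_le'.2 (by exact_mod_cast (by omega : k + 1 ≤ d))
  have hc : 1 - ((d : ℝ) - k) / d = k / d := by field_simp; ring
  rw [barrierG_smul_one, sum_log_sq_sub_sq_eq_card p _ hy₀, hc]
  have h1 := mul_le_mul_of_nonneg_left (Real.neg_log_div_le_log hdk hd) hd.le
  have h2 := mul_le_mul_of_nonneg_left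
    (Real.neg_log_div_le_log (a := k) (Nat.one_le_cast.2 hk1) hd) hd.le
  linarith

end Barrier

theorem stmt_16_general (n d k : ℕ) (hk1 : 1 ≤ k) (hk2 : k ≤ d - 1)
    (p : Fin n → Fin d → ℝ) (t : ℝ) (ht : 1 < t)
    (Xstar : Matrix (Fin d) (Fin d) ℝ) (ystar : Fin n → ℝ)
    (hfeas : barrierDom k p Xstar ystar)
    (X₀ : Matrix (Fin d) (Fin d) ℝ)
    (hX₀ : X₀ = (((d : ℝ) - k) / d) • (1 : Matrix (Fin d) (Fin d) ℝ))
    (y₀ : Fin n → ℝ)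
    (hy₀ : ∀ i, y₀ i = Real.sqrt ((l2norm (X₀.mulVec (p i))) ^ 2 + Real.exp 1)) :
    barrierG p t X₀ y₀ - barrierG p t Xstar ystar
      ≤ t * ∑ i, y₀ i - (n : ℝ) + 2 * (d : ℝ) * Real.log d + ∑ i, ystar i := by
  subst hX₀
  linarith [barrierG_init_le p t hk1 hk2 hy₀, neg_sum_le_barrierG p t hfeas ht.le]

/-- If `(X*, y*)` minimizes `G_t` over the domain `D` for some `t > 1`,
and `X₀ := ((d−k)/d)·I`, `(y₀)ᵢ := √(‖X₀ pᵢ‖₂² + e)`, then the initialization gap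
`ρ := G_t(X₀,y₀) − G_t(X*,y*)` satisfies
`ρ ≤ t·∑ᵢ (y₀)ᵢ − n + 2d·ln d + ∑ᵢ y*ᵢ`. -/
theorem stmt_16 (n d k : ℕ) (hn : 1 ≤ n) (hd : 2 ≤ d) (hk1 : 1 ≤ k) (hk2 : k ≤ d - 1)
    (p : Fin n → Fin d → ℝ) (t : ℝ) (ht : 1 < t)
    (Xstar : Matrix (Fin d) (Fin d) ℝ) (ystar : Fin n → ℝ)
    (hfeas : barrierDom k p Xstar ystar)
    (hmin : ∀ (X : Matrix (Fin d) (Fin d) ℝ) (y : Fin n → ℝ),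
      barrierDom k p X y → barrierG p t Xstar ystar ≤ barrierG p t X y)
    (X₀ : Matrix (Fin d) (Fin d) ℝ)
    (hX₀ : X₀ = (((d : ℝ) - k) / d) • (1 : Matrix (Fin d) (Fin d) ℝ))
    (y₀ : Fin n → ℝ)
    (hy₀ : ∀ i, y₀ i = Real.sqrt ((l2norm (X₀.mulVec (p i))) ^ 2 + Real.exp 1)) :
    barrierG p t X₀ y₀ - barrierG p t Xstar ystar
      ≤ t * ∑ i, y₀ i - (n : ℝ) + 2 * (d : ℝ) * Real.log d + ∑ i, ystar i :=
  stmt_16_general n d k hk1 hk2 p t ht Xstar ystar hfeas X₀ hX₀ y₀ hy₀
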